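/- For all integers m, n ≥ 1, there exist a bidirected tree T that is a bidirected star with center x_0 and m+n leaves, and a set R of m+n requests of length 1 in T (m converging requests of the form (y, x_0) and n diverging requests of the form (x_0, y'), over disjoint sets of leaves y and y'), such that the interference graph I(R,T) is isomorphic to the complete bipartite graph K_{m,n}. -/

import Mathlib

open SimpleGraph

/-- A request in a bidirected tree `T`: a directed path of length at least 1,
encoded as a path (walk without vertex repetition) in the underlying tree. -/
structure Request {V : Type*} (T : SimpleGraph V) where
  s : V
  t : V
  toWalk : T.Walk s t
  isPath : toWalk.IsPath
  one_le_length : 1 ≤ toWalk.length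

namespace Request

variable {V : Type*} {T : SimpleGraph V}

/-- The second vertex `s_r⁺` of a request. -/
def sPlus (r : Request T) : V := r.toWalk.getVert 1

/-- The penultimate vertex `t_r⁻` of a request. -/
def tMinus (r : Request T) : V := r.toWalk.getVert (r.toWalk.length - 1)

end Request

variable {V : Type*}

/-- `r` interferes on `r'` if the unique path from `s_r` to `t_{r'}` in the tree `T`
has first arc the emission arc of `r` and last arc the reception arc of `r'`. -/
def InterferesOn (T : SimpleGraph V) (r r' : Request T) : Prop :=
  ∃ p : T.Walk r.s r'.t, p.IsPath ∧ 1 ≤ p.length ∧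
    p.getVert 1 = r.sPlus ∧ p.getVert (p.length - 1) = r'.tMinus

/-- Two requests interfere if one of them interferes on the other. -/
def Interfere (T : SimpleGraph V) (r r' : Request T) : Prop :=
  InterferesOn T r r' ∨ InterferesOn T r' r

/-- `x` is an ancestor of `y` in the tree `T` rooted at `z`:
`x` lies on the unique path from `z` to `y`. -/
def Ancestor (T : SimpleGraph V) (z x y : V) : Prop :=
  ∃ p : T.Walk z y, p.IsPath ∧ x ∈ p.support

/-- Two vertices are related if one is an ancestor of the other. -/
def Related (T : SimpleGraph V) (z x y : V) : Prop :=
  Ancestor T z x y ∨ Ancestor T z y x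

/-- A request is converging (w.r.t. root `z`) if all its arcs are directed towards `z`,
i.e. the head of every arc is an ancestor of its tail. -/
def Converging (T : SimpleGraph V) (z : V) (r : Request T) : Prop :=
  ∀ i < r.toWalk.length, Ancestor T z (r.toWalk.getVert (i+1)) (r.toWalk.getVert i)

/-- A request is diverging (w.r.t. root `z`) if all its arcs are directed away from `z`,
i.e. the tail of every arc is an ancestor of its head. -/
def Diverging (T : SimpleGraph V) (z : V) (r : Request T) : Prop :=
  ∀ i < r.toWalk.length, Ancestor T z (r.toWalk.getVert i) (r.toWalk.getVert (i+1))

/-- A request is unimodal (w.r.t. root `z`) if it is neither converging nor diverging. -/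
def Unimodal (T : SimpleGraph V) (z : V) (r : Request T) : Prop :=
  ¬ Converging T z r ∧ ¬ Diverging T z r

/-- `m` is the middle of the request `r` (w.r.t. root `z`): the vertex of `r`
closest to the root, i.e. the vertex of `r` which is an ancestor of every vertex of `r`. -/
def IsMiddle (T : SimpleGraph V) (z : V) (r : Request T) (m : V) : Prop :=
  m ∈ r.toWalk.support ∧ ∀ y ∈ r.toWalk.support, Ancestor T z m y

/-- The interference graph of a family of requests: two (indices of) requests are
adjacent iff they are distinct and the requests interfere. -/
def interferenceGraph (T : SimpleGraph V) {ι : Type*} (f : ι → Request T) :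
    SimpleGraph ι where
  Adj i j := i ≠ j ∧ Interfere T (f i) (f j)
  symm := by
    refine ⟨fun i j h => ?_⟩
    exact ⟨h.1.symm, h.2.symm⟩
  loopless := by
    refine ⟨fun i h => ?_⟩
    exact h.1 rfl

/-- The interference graph of a set of requests. -/
def interGraph (T : SimpleGraph V) (R : Set (Request T)) : SimpleGraph ↥R :=
  interferenceGraph T (fun r => (r : Request T))

/-- The pair `(a, b)` is an arc joining two consecutive vertices of the
bidirected path corresponding to the walk `p` (in either direction). -/
def ArcOn (T : SimpleGraph V) {u v : V} (p : T.Walk u v) (a b : V) : Prop :=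
  ∃ j < p.length, (p.getVert j = a ∧ p.getVert (j+1) = b) ∨
    (p.getVert j = b ∧ p.getVert (j+1) = a)

/-- The request `r` shares an arc with the bidirected path corresponding to
the walk `p`. -/
def SharesArc (T : SimpleGraph V) {u v : V} (p : T.Walk u v) (r : Request T) : Prop :=
  ∃ i < r.toWalk.length, ArcOn T p (r.toWalk.getVert i) (r.toWalk.getVert (i+1))

/-- A leaf of a tree: a vertex with at most one neighbour. -/
def IsLeaf (T : SimpleGraph V) (y : V) : Prop :=
  {w | T.Adj y w}.Subsingleton

/-- A comparability graph: there is a partial order on the vertices such that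
two distinct vertices are adjacent iff they are comparable. -/
def IsComparabilityGraph {α : Type*} (G : SimpleGraph α) : Prop :=
  ∃ le : α → α → Prop, IsPartialOrder α le ∧ ∀ a b, G.Adj a b ↔ a ≠ b ∧ (le a b ∨ le b a)

/-- A cobipartite graph: the vertex set can be partitioned into two cliques. -/
def IsCobipartite {α : Type*} (G : SimpleGraph α) : Prop :=
  ∃ A : Set α, G.IsClique A ∧ G.IsClique Aᶜ

/-!
In the star with centre `x₀`, the converging request `(y, x₀)` interferes on the diverging
request `(x₀, y')` whenever `y ≠ y'`: the path `y x₀ y'` starts with the emission arc of the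
first and ends with the reception arc of the second. Conversely, a path visits `x₀` at most
once. So the path from `y₁` to `x₀` witnessing that `(y₁, x₀)` interferes on `(y₂, x₀)` is the
single arc `(y₁, x₀)`, forcing `y₁ = y₂`; symmetrically for diverging requests; and `(x₀, y)`
cannot interfere on `(y', x₀)`, as the witnessing path would have both ends at `x₀`. Hence
converging requests on `m` leaves and diverging requests on `n` other leaves interfere exactly
as in `K_{m,n}`.
-/

open SimpleGraph

namespace Request

variable {V : Type*} {T : SimpleGraph V}

def ofAdj {u v : V} (h : T.Adj u v) : Request T :=
  ⟨u, v, h.toWalk, .of_adj h, by simp⟩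

@[simp] theorem ofAdj_s {u v : V} (h : T.Adj u v) : (ofAdj h).s = u := rfl
@[simp] theorem ofAdj_t {u v : V} (h : T.Adj u v) : (ofAdj h).t = v := rfl
@[simp] theorem ofAdj_sPlus {u v : V} (h : T.Adj u v) : (ofAdj h).sPlus = v := rfl
@[simp] theorem ofAdj_tMinus {u v : V} (h : T.Adj u v) : (ofAdj h).tMinus = u := rfl

theorem adj_s_sPlus (r : Request T) : T.Adj r.s r.sPlus := by
  simpa [sPlus] using r.toWalk.adj_getVert_succ (i := 0) r.one_le_length

theorem adj_tMinus_t (r : Request T) : T.Adj r.tMinus r.t := by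
  have := r.toWalk.adj_getVert_succ (i := r.toWalk.length - 1) (by have := r.one_le_length; omega)
  rwa [Nat.sub_add_cancel r.one_le_length, Walk.getVert_length] at this

end Request

section Interference

variable {V : Type*} {T : SimpleGraph V} {r r' : Request T}

theorem interferesOn_self (r : Request T) : InterferesOn T r r :=
  ⟨r.toWalk, r.isPath, r.one_le_length, rfl, rfl⟩

theorem interferesOn_of_sPlus_eq_tMinus (h : r.sPlus = r'.tMinus) (hne : r.s ≠ r'.t) :
    InterferesOn T r r' := by
  have hs := r.adj_s_sPlus
  have ht := r'.adj_tMinus_t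
  rw [h] at hs
  refine ⟨.cons hs (.cons ht .nil), ?_, by simp, h.symm, rfl⟩
  simp [Walk.cons_isPath_iff, hs.ne, ht.ne, hne]

theorem InterferesOn.s_ne_t (h : InterferesOn T r r') : r.s ≠ r'.t := by
  obtain ⟨p, hp, hlen, -⟩ := h
  intro hst
  have : 0 = p.length := hp.getVert_injOn (by simp) (by simp)
    (by rw [Walk.getVert_zero, Walk.getVert_length, hst])
  omega

theorem InterferesOn.tMinus_eq_s_of_sPlus_eq_t (h : InterferesOn T r r')
    (hst : r.sPlus = r'.t) : r'.tMinus = r.s := by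
  obtain ⟨p, hp, hlen, h₁, h₂⟩ := h
  have hp₁ : 1 = p.length := hp.getVert_injOn (by simpa using hlen) (by simp)
    (by rw [h₁, hst, Walk.getVert_length])
  rw [← h₂, ← hp₁, Walk.getVert_zero]

theorem InterferesOn.sPlus_eq_t_of_tMinus_eq_s (h : InterferesOn T r r')
    (hts : r'.tMinus = r.s) : r.sPlus = r'.t := by
  obtain ⟨p, hp, hlen, h₁, h₂⟩ := h
  have hp₁ : p.length - 1 = 0 := hp.getVert_injOn (by simp) (by simp)
    (by rw [h₂, hts, Walk.getVert_zero])
  rw [← h₁, show 1 = p.length by omega, Walk.getVert_length]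

theorem interfere_comm : Interfere T r r' ↔ Interfere T r' r := or_comm

end Interference

section Star

variable {α : Type*}

def convergingRequest (a : α) : Request (starGraph (none : Option α)) :=
  .ofAdj (starGraph_center_adj' (Option.some_ne_none a).symm)

def divergingRequest (a : α) : Request (starGraph (none : Option α)) :=
  .ofAdj (starGraph_center_adj (Option.some_ne_none a).symm)

theorem interfere_convergingRequest_iff {a b : α} :
    Interfere _ (convergingRequest a) (convergingRequest b) ↔ a = b := by
  refine ⟨fun h => ?_, fun h => h ▸ .inl (interferesOn_self _)⟩
  rcases h with h | h <;>
    simpa [convergingRequest, eq_comm] using h.tMinus_eq_s_of_sPlus_eq_t rfl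

theorem interfere_divergingRequest_iff {a b : α} :
    Interfere _ (divergingRequest a) (divergingRequest b) ↔ a = b := by
  refine ⟨fun h => ?_, fun h => h ▸ .inl (interferesOn_self _)⟩
  rcases h with h | h <;>
    simpa [divergingRequest, eq_comm] using h.sPlus_eq_t_of_tMinus_eq_s rfl

theorem interfere_convergingRequest_divergingRequest_iff {a b : α} :
    Interfere _ (convergingRequest a) (divergingRequest b) ↔ a ≠ b := by
  refine ⟨fun h hab => ?_, fun hab => .inl <| interferesOn_of_sPlus_eq_tMinus rfl <| by
    simpa [convergingRequest, divergingRequest]⟩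
  subst hab
  rcases h with h | h <;> exact h.s_ne_t rfl

theorem interfere_divergingRequest_convergingRequest_iff {a b : α} :
    Interfere _ (divergingRequest a) (convergingRequest b) ↔ b ≠ a :=
  interfere_comm.trans interfere_convergingRequest_divergingRequest_iff

def starRequests (β γ : Type*) : β ⊕ γ → Request (starGraph (none : Option (β ⊕ γ))) :=
  Sum.elim (convergingRequest ∘ .inl) (divergingRequest ∘ .inr)

theorem starRequests_injective (β γ : Type*) : (starRequests β γ).Injective := by
  rintro (b | c) (b' | c') h <;>
    simpa [starRequests, convergingRequest, divergingRequest]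
      using congrArg (fun r => (r.s, r.t)) h

theorem interferenceGraph_starRequests (β γ : Type*) :
    interferenceGraph _ (starRequests β γ) = completeBipartiteGraph β γ := by
  ext (b | c) (b' | c') <;>
  simp [interferenceGraph, starRequests, interfere_convergingRequest_iff,
    interfere_divergingRequest_iff, interfere_convergingRequest_divergingRequest_iff,
    interfere_divergingRequest_convergingRequest_iff]

end Star

theorem star_interference_iso_completeBipartite_general (m n : ℕ) :
    ∃ (V : Type) (T : SimpleGraph V) (x₀ : V),
      T.IsTree ∧
      (∀ u v : V, T.Adj u v → u = x₀ ∨ v = x₀) ∧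
      Nat.card V = m + n + 1 ∧
      ∃ f : Fin m ⊕ Fin n → Request T,
        Function.Injective f ∧
        (∀ i : Fin m, (f (Sum.inl i)).t = x₀ ∧ (f (Sum.inl i)).toWalk.length = 1) ∧
        (∀ j : Fin n, (f (Sum.inr j)).s = x₀ ∧ (f (Sum.inr j)).toWalk.length = 1) ∧
        (∀ (i : Fin m) (j : Fin n), (f (Sum.inl i)).s ≠ (f (Sum.inr j)).t) ∧
        (∀ i i' : Fin m, i ≠ i' → (f (Sum.inl i)).s ≠ (f (Sum.inl i')).s) ∧
        (∀ j j' : Fin n, j ≠ j' → (f (Sum.inr j)).t ≠ (f (Sum.inr j')).t) ∧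
        Nonempty (interferenceGraph T f ≃g completeBipartiteGraph (Fin m) (Fin n)) := by
  refine ⟨_, starGraph none, none, isTree_starGraph none, fun _ _ h => (starGraph_adj.1 h).2,
    by simp [add_assoc], starRequests _ _, starRequests_injective _ _, fun _ => ⟨rfl, rfl⟩,
    fun _ => ⟨rfl, rfl⟩, ?_, ?_, ?_, interferenceGraph_starRequests _ _ ▸ ⟨.refl⟩⟩ <;>
  simp [starRequests, convergingRequest, divergingRequest]

open SimpleGraph in
/-- Corollary 21 (construction): for all `m, n ≥ 1` there are a bidirected star `T`
with centre `x₀` and `m + n` leaves, and `m + n` requests of length 1 in `T`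
(`m` converging ones of the form `(y, x₀)` and `n` diverging ones of the form
`(x₀, y')`, over disjoint sets of leaves), whose interference graph is
isomorphic to `K_{m,n}`. -/
theorem star_interference_iso_completeBipartite (m n : ℕ) (hm : 1 ≤ m) (hn : 1 ≤ n) :
    ∃ (V : Type) (T : SimpleGraph V) (x₀ : V),
      T.IsTree ∧
      (∀ u v : V, T.Adj u v → u = x₀ ∨ v = x₀) ∧
      Nat.card V = m + n + 1 ∧
      ∃ f : Fin m ⊕ Fin n → Request T,
        Function.Injective f ∧
        (∀ i : Fin m, (f (Sum.inl i)).t = x₀ ∧ (f (Sum.inl i)).toWalk.length = 1) ∧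
        (∀ j : Fin n, (f (Sum.inr j)).s = x₀ ∧ (f (Sum.inr j)).toWalk.length = 1) ∧
        (∀ (i : Fin m) (j : Fin n), (f (Sum.inl i)).s ≠ (f (Sum.inr j)).t) ∧
        (∀ i i' : Fin m, i ≠ i' → (f (Sum.inl i)).s ≠ (f (Sum.inl i')).s) ∧
        (∀ j j' : Fin n, j ≠ j' → (f (Sum.inr j)).t ≠ (f (Sum.inr j')).t) ∧
        Nonempty (interferenceGraph T f ≃g completeBipartiteGraph (Fin m) (Fin n)) :=
  star_interference_iso_completeBipartite_general m n
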